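/- Let G be a finite 5-regular simple graph on n vertices having an independent exact r-cover for every r ∈ {1,2,3,4,5}. Then 6048 divides n. -/

import Mathlib

open SimpleGraph

/-- `S` is an independent exact `r`-cover of `G`: `S` is independent and every vertex
outside `S` has exactly `r` neighbours in `S`. -/
def IsIndepExactCover {V : Type*} (G : SimpleGraph V) (r : ℕ) (S : Set V) : Prop :=
  (∀ x ∈ S, ∀ y ∈ S, ¬ G.Adj x y) ∧
  ∀ v ∉ S, (S ∩ G.neighborSet v).ncard = r

/-!
Write `M` for the adjacency matrix and `𝟙_A` for indicator vectors. An independent exact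
`r`-cover `S` satisfies `M 𝟙_S = r 𝟙_{Sᶜ}`, and since `M` is symmetric, any two
relations `M 𝟙_A = a 𝟙_B` and `M 𝟙_C = c 𝟙_D` give `c |A ∩ D| = a |B ∩ C|`. An exact
`5`-cover `X` makes the graph bipartite with sides `X` and `Xᶜ`, so such relations may also be
restricted to either side. The resulting linear equations give `(5 + r) |S_r| = r n`,
`(5 + r₁) (5 + r₂) |S_{r₁} ∩ S_{r₂}| = r₁ r₂ n`, and show that `X` halves `S_{r₁} ∩ S_{r₂}`.
For `r = 2` and `(r₁, r₂) = (1, 3), (1, 4)` these say that `7`, `32` and `27` divide `n`.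
-/

section

open Matrix Set

variable {V : Type*} {G : SimpleGraph V}

theorem Set.sum_indicator_one_eq_ncard [Fintype V] (S : Set V) :
    ∑ v, S.indicator (1 : V → ℕ) v = S.ncard := by
  classical
  rw [ncard_eq_toFinset_card']
  simp [indicator_apply, Finset.sum_boole]

theorem Set.indicator_one_dotProduct_indicator_one [Fintype V] (A B : Set V) :
    A.indicator (1 : V → ℕ) ⬝ᵥ B.indicator 1 = (A ∩ B).ncard := by
  rw [dotProduct, ← sum_indicator_one_eq_ncard, inter_indicator_one]
  rfl

namespace SimpleGraph

def ExactlyCovers (G : SimpleGraph V) (A : Set V) (a : ℕ) (B : Set V) : Prop :=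
  ∀ v, (A ∩ G.neighborSet v).ncard = B.indicator (fun _ ↦ a) v

theorem adjMatrix_mulVec_indicator_one [Fintype V] [DecidableRel G.Adj] (A : Set V) (v : V) :
    (G.adjMatrix ℕ *ᵥ A.indicator 1) v = (A ∩ G.neighborSet v).ncard := by
  classical
  rw [adjMatrix_mulVec_apply, ncard_eq_toFinset_card']
  simp only [indicator_apply, Pi.one_apply, Finset.sum_boole, Nat.cast_id, toFinset_inter]
  congr 1
  ext
  simp [and_comm]

theorem dotProduct_adjMatrix_mulVec_comm [Fintype V] [DecidableRel G.Adj] (f g : V → ℕ) :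
    f ⬝ᵥ (G.adjMatrix ℕ *ᵥ g) = (G.adjMatrix ℕ *ᵥ f) ⬝ᵥ g := by
  rw [dotProduct_mulVec, ← mulVec_transpose, transpose_adjMatrix]

theorem ExactlyCovers.adjMatrix_mulVec [Fintype V] [DecidableRel G.Adj] {A B : Set V} {a : ℕ}
    (h : G.ExactlyCovers A a B) : G.adjMatrix ℕ *ᵥ A.indicator 1 = a • B.indicator 1 := by
  ext v
  rw [adjMatrix_mulVec_indicator_one, h v]
  by_cases hv : v ∈ B <;> simp [hv]

theorem ExactlyCovers.mul_ncard_inter_eq [Finite V] {A B C D : Set V} {a c : ℕ}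
    (hA : G.ExactlyCovers A a B) (hC : G.ExactlyCovers C c D) :
    c * (A ∩ D).ncard = a * (B ∩ C).ncard := by
  classical
  have := Fintype.ofFinite V
  calc c * (A ∩ D).ncard = A.indicator 1 ⬝ᵥ (G.adjMatrix ℕ *ᵥ C.indicator 1) := by
        rw [hC.adjMatrix_mulVec, dotProduct_smul, indicator_one_dotProduct_indicator_one,
          smul_eq_mul]
    _ = (G.adjMatrix ℕ *ᵥ A.indicator 1) ⬝ᵥ C.indicator 1 := dotProduct_adjMatrix_mulVec_comm _ _
    _ = a * (B ∩ C).ncard := by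
        rw [hA.adjMatrix_mulVec, smul_dotProduct, indicator_one_dotProduct_indicator_one,
          smul_eq_mul]

theorem exactlyCovers_univ {d : ℕ} (hG : ∀ v, (G.neighborSet v).ncard = d) :
    G.ExactlyCovers univ d univ := by
  intro v
  simp [hG v]

theorem ExactlyCovers.inter {A B X Y : Set V} {a : ℕ} (h : G.ExactlyCovers A a B)
    (hXY : G.IsBipartiteWith X Y) : G.ExactlyCovers (A ∩ X) a (B ∩ Y) := by
  intro v
  by_cases hv : v ∈ Y
  · have hN : A ∩ X ∩ G.neighborSet v = A ∩ G.neighborSet v := by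
      ext u
      simpa using fun hu _ ↦ isBipartiteWith_neighborSet_subset' hXY hv hu
    rw [hN, h v]
    by_cases hB : v ∈ B <;> simp [hB, hv]
  · have hN : A ∩ X ∩ G.neighborSet v = ∅ := by
      refine eq_empty_of_forall_notMem fun u ⟨⟨_, huX⟩, hvu⟩ ↦ ?_
      rcases hXY.mem_of_adj hvu with ⟨_, huY⟩ | ⟨hvY, _⟩
      · exact hXY.disjoint.notMem_of_mem_left huX huY
      · exact hv hvY
    rw [hN, ncard_empty, indicator_of_notMem fun hv' ↦ hv hv'.2]

end SimpleGraph

theorem IsIndepExactCover.exactlyCovers {r : ℕ} {S : Set V} (hS : IsIndepExactCover G r S) :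
    G.ExactlyCovers S r Sᶜ := by
  intro v
  by_cases hv : v ∈ S
  · have hN : S ∩ G.neighborSet v = ∅ :=
      eq_empty_of_forall_notMem fun u ⟨hu, hvu⟩ ↦ hS.1 v hv u hu hvu
    rw [hN, ncard_empty, indicator_of_notMem (notMem_compl_iff.mpr hv)]
  · rw [indicator_of_mem (mem_compl hv)]
    exact hS.2 v hv

theorem IsIndepExactCover.isBipartiteWith_compl [Finite V] {d : ℕ} {X : Set V}
    (hG : ∀ v, (G.neighborSet v).ncard = d) (hX : IsIndepExactCover G d X) :
    G.IsBipartiteWith X Xᶜ where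
  disjoint := disjoint_compl_right
  mem_of_adj v w hvw := by
    by_cases hv : v ∈ X
    · exact Or.inl ⟨hv, fun hw ↦ hX.1 v hv w hw hvw⟩
    · have hN : X ∩ G.neighborSet v = G.neighborSet v :=
        eq_of_subset_of_ncard_le inter_subset_right (by rw [hG v, hX.2 v hv])
      have hw : w ∈ X ∩ G.neighborSet v := by rwa [hN]
      exact Or.inr ⟨hv, hw.1⟩

theorem Set.ncard_inter_add_ncard_inter_compl [Finite V] (A X : Set V) :
    (A ∩ X).ncard + (A ∩ Xᶜ).ncard = A.ncard := by
  rw [← sdiff_eq]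
  exact ncard_inter_add_ncard_sdiff_eq_ncard A X

namespace IsIndepExactCover

variable [Finite V] {d r r₁ r₂ : ℕ} {S T X : Set V}

theorem add_mul_ncard_eq (hG : ∀ v, (G.neighborSet v).ncard = d)
    (hS : IsIndepExactCover G r S) : (d + r) * S.ncard = r * Nat.card V := by
  have h := hS.exactlyCovers.mul_ncard_inter_eq (exactlyCovers_univ hG)
  rw [inter_univ, inter_univ] at h
  rw [← ncard_add_ncard_compl S]
  linear_combination h

theorem ncard_inter_eq_ncard_inter_compl (hG : ∀ v, (G.neighborSet v).ncard = d) (hd : d ≠ 0)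
    (hS : IsIndepExactCover G r S) (hX : IsIndepExactCover G d X) (hr : r ≠ d) :
    (S ∩ X).ncard = (S ∩ Xᶜ).ncard := by
  have hXY := hX.isBipartiteWith_compl hG
  have hsX := (hS.exactlyCovers.inter hXY).mul_ncard_inter_eq (exactlyCovers_univ hG)
  have hsY := (hS.exactlyCovers.inter hXY.symm).mul_ncard_inter_eq (exactlyCovers_univ hG)
  simp only [inter_univ] at hsX hsY
  have hXX : X.ncard = Xᶜ.ncard := by
    have h := hX.add_mul_ncard_eq hG
    rw [← ncard_add_ncard_compl X] at h
    exact mul_left_cancel₀ hd (by linear_combination h)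
  have hX' := ncard_inter_add_ncard_inter_compl X S
  have hY' := ncard_inter_add_ncard_inter_compl Xᶜ S
  simp only [inter_comm X, inter_comm Xᶜ] at hX' hY'
  have key : ((d : ℤ) - r) * ((S ∩ X).ncard - (S ∩ Xᶜ).ncard) = 0 := by
    zify at hsX hsY hXX hX' hY'
    linear_combination hsX - hsY + r * hY' - r * hX' - r * hXX
  exact_mod_cast sub_eq_zero.mp ((mul_eq_zero.mp key).resolve_left (by omega))

theorem add_mul_add_mul_ncard_inter_eq (hG : ∀ v, (G.neighborSet v).ncard = d)
    (hS : IsIndepExactCover G r₁ S) (hT : IsIndepExactCover G r₂ T) (h₁₂ : r₁ ≠ r₂) :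
    (d + r₁) * (d + r₂) * (S ∩ T).ncard = r₁ * r₂ * Nat.card V := by
  have hST := hS.exactlyCovers.mul_ncard_inter_eq hT.exactlyCovers
  have hs := hS.add_mul_ncard_eq hG
  have ht := hT.add_mul_ncard_eq hG
  have hS' := ncard_inter_add_ncard_inter_compl S T
  have hT' := ncard_inter_add_ncard_inter_compl T S
  simp only [inter_comm] at hST hS' hT' ⊢
  have key :
      ((r₁ : ℤ) - r₂) * ((d + r₁) * (d + r₂) * (S ∩ T).ncard - r₁ * r₂ * Nat.card V) = 0 := by
    zify at hST hs ht hS' hT'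
    linear_combination (d + r₁) * (d + r₂) * (hST - r₂ * hS' + r₁ * hT') + r₁ * (d + r₁) * ht
      - r₂ * (d + r₂) * hs
  exact_mod_cast sub_eq_zero.mp ((mul_eq_zero.mp key).resolve_left (by omega))

theorem ncard_inter_inter_eq_ncard_inter_inter_compl (hG : ∀ v, (G.neighborSet v).ncard = d)
    (hd : d ≠ 0) (hS : IsIndepExactCover G r₁ S) (hT : IsIndepExactCover G r₂ T)
    (hX : IsIndepExactCover G d X) (h₁ : r₁ ≠ d) (h₂ : r₂ ≠ d) (h₁₂ : r₁ ≠ r₂) :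
    (S ∩ T ∩ X).ncard = (S ∩ T ∩ Xᶜ).ncard := by
  have hXY := hX.isBipartiteWith_compl hG
  have hSX := (hS.exactlyCovers.inter hXY).mul_ncard_inter_eq hT.exactlyCovers
  have hSY := (hS.exactlyCovers.inter hXY.symm).mul_ncard_inter_eq hT.exactlyCovers
  have hS' := hS.ncard_inter_eq_ncard_inter_compl hG hd hX h₁
  have hT' := hT.ncard_inter_eq_ncard_inter_compl hG hd hX h₂
  have hSX' := ncard_inter_add_ncard_inter_compl (S ∩ X) T
  have hSY' := ncard_inter_add_ncard_inter_compl (S ∩ Xᶜ) T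
  have hTX' := ncard_inter_add_ncard_inter_compl (T ∩ X) S
  have hTY' := ncard_inter_add_ncard_inter_compl (T ∩ Xᶜ) S
  simp only [inter_comm, inter_left_comm] at hSX hSY hS' hT' hSX' hSY' hTX' hTY' ⊢
  have key : ((r₁ : ℤ) + r₂) * ((S ∩ (T ∩ X)).ncard - (S ∩ (T ∩ Xᶜ)).ncard) = 0 := by
    zify at hSX hSY hS' hT' hSX' hSY' hTX' hTY'
    linear_combination hSY - hSX + r₂ * (hSX' - hSY' + hS') + r₁ * (hTX' - hTY' + hT')
  exact_mod_cast sub_eq_zero.mp ((mul_eq_zero.mp key).resolve_left (by omega))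

theorem two_mul_add_mul_add_mul_ncard_inter_inter_eq (hG : ∀ v, (G.neighborSet v).ncard = d)
    (hd : d ≠ 0) (hS : IsIndepExactCover G r₁ S) (hT : IsIndepExactCover G r₂ T)
    (hX : IsIndepExactCover G d X) (h₁ : r₁ ≠ d) (h₂ : r₂ ≠ d) (h₁₂ : r₁ ≠ r₂) :
    2 * (d + r₁) * (d + r₂) * (S ∩ T ∩ X).ncard = r₁ * r₂ * Nat.card V := by
  rw [← hS.add_mul_add_mul_ncard_inter_eq hG hT h₁₂,
    ← ncard_inter_add_ncard_inter_compl (S ∩ T) X,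
    ← hS.ncard_inter_inter_eq_ncard_inter_inter_compl hG hd hT hX h₁ h₂ h₁₂]
  ring

end IsIndepExactCover
end

theorem stmt_8 {V : Type*} [Fintype V] (G : SimpleGraph V) (n : ℕ)
    (hn : Fintype.card V = n)
    (hreg : ∀ v : V, (G.neighborSet v).ncard = 5)
    (hcov : ∀ r, 1 ≤ r → r ≤ 5 → ∃ S : Set V, IsIndepExactCover G r S) :
    6048 ∣ n := by
  obtain ⟨S₁, hS₁⟩ := hcov 1 (by norm_num) (by norm_num)
  obtain ⟨S₂, hS₂⟩ := hcov 2 (by norm_num) (by norm_num)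
  obtain ⟨S₃, hS₃⟩ := hcov 3 (by norm_num) (by norm_num)
  obtain ⟨S₄, hS₄⟩ := hcov 4 (by norm_num) (by norm_num)
  obtain ⟨S₅, hS₅⟩ := hcov 5 (by norm_num) (by norm_num)
  have h₇ := hS₂.add_mul_ncard_eq hreg
  have h₃₂ := hS₁.two_mul_add_mul_add_mul_ncard_inter_inter_eq hreg (by norm_num) hS₃ hS₅
    (by norm_num) (by norm_num) (by norm_num)
  have h₂₇ := hS₁.two_mul_add_mul_add_mul_ncard_inter_inter_eq hreg (by norm_num) hS₄ hS₅
    (by norm_num) (by norm_num) (by norm_num)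
  rw [Nat.card_eq_fintype_card, hn] at h₇ h₃₂ h₂₇
  omega
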